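/- arXiv:2503.10495 — 4 statements merged into one kernel-verified Lean document; each statement's English description precedes it below -/
import Mathlib

section
/- Let T > 0, m > 0 and 0 ≤ K < m, and let y : [0,T] → ℝ be differentiable with y(0) ∈ (0,1) and 0 ≤ y'(t) + m·y(t) ≤ K for every t ∈ [0,T]. Then δ := min{1/4, y(0)·e^{−m T}, 1 − max{K/m, y(0)}} satisfies δ ∈ (0, 1/2) and δ ≤ y(t) ≤ 1 − δ for every t ∈ [0,T]. -/
/-!
Multiplying by the integrating factor `e^{mt}` turns `0 ≤ y' + m y ≤ K` into the monotonicity of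
`e^{mt} y` and of `e^{mt} (K/m - y)`. The first gives `y t ≥ y 0 e^{-mt}`, the second
`y t ≤ (1 - e^{-mt}) K/m + e^{-mt} y 0`, a convex combination of `K/m` and `y 0`.
-/

open Real Set

theorem hasDerivAt_exp_mul_mul {y : ℝ → ℝ} {y'ₜ m t : ℝ} (hy : HasDerivAt y y'ₜ t) :
    HasDerivAt (fun s => exp (m * s) * y s) (exp (m * t) * (y'ₜ + m * y t)) t := by
  have hexp : HasDerivAt (fun s => exp (m * s)) (exp (m * t) * (m * 1)) t :=
    ((hasDerivAt_id t).const_mul m).exp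
  exact (hexp.mul hy).congr_deriv (by ring)

theorem monotoneOn_exp_mul_mul {D : Set ℝ} (hD : Convex ℝ D) {y y' : ℝ → ℝ} {m : ℝ}
    (hderiv : ∀ t ∈ D, HasDerivAt y (y' t) t) (hnonneg : ∀ t ∈ D, 0 ≤ y' t + m * y t) :
    MonotoneOn (fun t => exp (m * t) * y t) D := by
  have hz : ∀ t ∈ D, HasDerivAt (fun s => exp (m * s) * y s) (exp (m * t) * (y' t + m * y t)) t :=
    fun t ht => hasDerivAt_exp_mul_mul (hderiv t ht)
  exact monotoneOn_of_hasDerivWithinAt_nonneg hD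
    (fun t ht => (hz t ht).continuousAt.continuousWithinAt)
    (fun t ht => (hz t (interior_subset ht)).hasDerivWithinAt)
    (fun t ht => mul_nonneg (exp_pos _).le (hnonneg t (interior_subset ht)))

section Interval

variable {T m : ℝ} {y y' : ℝ → ℝ}

theorem mul_exp_neg_le_of_deriv_add_mul_nonneg (hm : 0 ≤ m) (hy0 : 0 ≤ y 0)
    (hderiv : ∀ t ∈ Icc 0 T, HasDerivAt y (y' t) t)
    (hnonneg : ∀ t ∈ Icc 0 T, 0 ≤ y' t + m * y t) :
    ∀ t ∈ Icc 0 T, y 0 * exp (-m * T) ≤ y t := by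
  intro t ht
  have hmono : y 0 ≤ exp (m * t) * y t := by
    simpa using monotoneOn_exp_mul_mul (convex_Icc 0 T) hderiv hnonneg
      (left_mem_Icc.2 (ht.1.trans ht.2)) ht ht.1
  calc y 0 * exp (-m * T) ≤ y 0 * exp (-m * t) :=
        mul_le_mul_of_nonneg_left (exp_le_exp.2 (by nlinarith [ht.2])) hy0
    _ ≤ exp (m * t) * y t * exp (-m * t) := mul_le_mul_of_nonneg_right hmono (exp_pos _).le
    _ = y t := by rw [mul_comm, ← mul_assoc, ← exp_add]; simp

theorem le_max_of_deriv_add_mul_le {K : ℝ} (hm : 0 < m)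
    (hderiv : ∀ t ∈ Icc 0 T, HasDerivAt y (y' t) t)
    (hle : ∀ t ∈ Icc 0 T, y' t + m * y t ≤ K) :
    ∀ t ∈ Icc 0 T, y t ≤ max (K / m) (y 0) := by
  intro t ht
  have hgap : ∀ s ∈ Icc 0 T, HasDerivAt (fun r => K / m - y r) (-y' s) s :=
    fun s hs => (hderiv s hs).const_sub _
  have hgap_nonneg : ∀ s ∈ Icc 0 T, 0 ≤ -y' s + m * (K / m - y s) := by
    intro s hs
    have := hle s hs
    rw [mul_sub, mul_div_cancel₀ _ hm.ne']
    linarith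
  have hmono : K / m - y 0 ≤ exp (m * t) * (K / m - y t) := by
    simpa using monotoneOn_exp_mul_mul (convex_Icc 0 T) hgap hgap_nonneg
      (left_mem_Icc.2 (ht.1.trans ht.2)) ht ht.1
  have hexp : 1 ≤ exp (m * t) := one_le_exp (mul_nonneg hm.le ht.1)
  have hK : K / m ≤ max (K / m) (y 0) := le_max_left _ _
  have hy0 : y 0 ≤ max (K / m) (y 0) := le_max_right _ _
  -- `e^{mt} y t ≤ y 0 + (e^{mt} - 1) K/m ≤ e^{mt} max (K/m) (y 0)`
  have : exp (m * t) * y t ≤ exp (m * t) * max (K / m) (y 0) := by nlinarith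
  exact le_of_mul_le_mul_left this (exp_pos _)

end Interval

theorem average_separation_general
    (T m K : ℝ) (hm : 0 < m) (hKm : K < m)
    (y y' : ℝ → ℝ)
    (hy0 : y 0 ∈ Set.Ioo (0:ℝ) 1)
    (hderiv : ∀ t ∈ Set.Icc (0:ℝ) T, HasDerivAt y (y' t) t)
    (hineq : ∀ t ∈ Set.Icc (0:ℝ) T, 0 ≤ y' t + m * y t ∧ y' t + m * y t ≤ K) :
    min (1/4) (min (y 0 * Real.exp (-m * T)) (1 - max (K/m) (y 0))) ∈ Set.Ioo (0:ℝ) (1/2) ∧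
    ∀ t ∈ Set.Icc (0:ℝ) T,
      min (1/4) (min (y 0 * Real.exp (-m * T)) (1 - max (K/m) (y 0))) ≤ y t ∧
      y t ≤ 1 - min (1/4) (min (y 0 * Real.exp (-m * T)) (1 - max (K/m) (y 0))) := by
  have hmax : max (K / m) (y 0) < 1 := max_lt ((div_lt_one hm).2 hKm) hy0.2
  have hlower := mul_exp_neg_le_of_deriv_add_mul_nonneg hm.le hy0.1.le hderiv
    fun t ht => (hineq t ht).1
  have hupper := le_max_of_deriv_add_mul_le hm hderiv fun t ht => (hineq t ht).2
  refine ⟨⟨lt_min (by norm_num) (lt_min (mul_pos hy0.1 (exp_pos _)) (by linarith)),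
      (min_le_left _ _).trans_lt (by norm_num)⟩, fun t ht => ⟨?_, ?_⟩⟩
  · exact (min_le_right _ _).trans ((min_le_left _ _).trans (hlower t ht))
  · have hδ : min (1/4) (min (y 0 * exp (-m * T)) (1 - max (K / m) (y 0))) ≤
        1 - max (K / m) (y 0) := (min_le_right _ _).trans (min_le_right _ _)
    linarith [hupper t ht]

/-- The spatial average of the phase variable stays uniformly away from the pure phases:
with `δ := min {1/4, y 0 · e^{-mT}, 1 - max {K/m, y 0}}` one has `δ ∈ (0,1/2)` and
`δ ≤ y t ≤ 1 - δ` on `[0,T]`. -/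
theorem average_separation
    (T m K : ℝ) (hT : 0 < T) (hm : 0 < m) (hK0 : 0 ≤ K) (hKm : K < m)
    (y y' : ℝ → ℝ)
    (hy0 : y 0 ∈ Set.Ioo (0:ℝ) 1)
    (hderiv : ∀ t ∈ Set.Icc (0:ℝ) T, HasDerivAt y (y' t) t)
    (hineq : ∀ t ∈ Set.Icc (0:ℝ) T, 0 ≤ y' t + m * y t ∧ y' t + m * y t ≤ K) :
    min (1/4) (min (y 0 * Real.exp (-m * T)) (1 - max (K/m) (y 0))) ∈ Set.Ioo (0:ℝ) (1/2) ∧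
    ∀ t ∈ Set.Icc (0:ℝ) T,
      min (1/4) (min (y 0 * Real.exp (-m * T)) (1 - max (K/m) (y 0))) ≤ y t ∧
      y t ≤ 1 - min (1/4) (min (y 0 * Real.exp (-m * T)) (1 - max (K/m) (y 0))) :=
  average_separation_general T m K hm hKm y y' hy0 hderiv hineq
end

section
/- Let h ∈ (0,1) and let F be the Lennard–Jones potential. Then for every r ∈ [1−h, 1) one has F''(r) ≥ (1−h)²/h > 0, and for every r ∈ (1−h, 1) one has F'(r) > 0. In particular F is strictly convex and strictly increasing on the interval (1−h, 1). -/
/-- The Lennard--Jones potential `F(r) = -h log(1-r) - r³/3 - h (r²/2 + r)`. -/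
noncomputable def FLJ (h r : ℝ) : ℝ := -h * Real.log (1 - r) - r^3/3 - h * (r^2/2 + r)

/-- Its first derivative on `[0,1)`: `F'(r) = h/(1-r) - r² - h (r+1)`. -/
noncomputable def FLJ' (h r : ℝ) : ℝ := h/(1-r) - r^2 - h * (r+1)

/-- Its second derivative on `[0,1)`: `F''(r) = h/(1-r)² - 2r - h`. -/
noncomputable def FLJ'' (h r : ℝ) : ℝ := h/(1-r)^2 - 2*r - h

/-!
With `s = 1 - r`, one has `F'(r) = r² (r - (1 - h)) / (1 - r)` and
`F''(r) - (1 - h)²/h = (h - s)(h + s - 2 h s²) / (h s²)`, and for `0 < s ≤ h ≤ 1` every factor is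
nonnegative. Strict monotonicity of `F` and of `F'` on `(1 - h, 1)` then follow from the positivity
of their derivatives, and a function with strictly increasing derivative is strictly convex.
-/

open Set

lemma hasDerivAt_FLJ (h : ℝ) {r : ℝ} (hr : r < 1) : HasDerivAt (FLJ h) (FLJ' h r) r := by
  have hlog := ((hasDerivAt_id r).const_sub 1).log (sub_ne_zero.2 hr.ne')
  refine (((hlog.const_mul (-h)).sub ((hasDerivAt_pow 3 r).div_const 3)).sub
    ((((hasDerivAt_pow 2 r).div_const 2).add (hasDerivAt_id r)).const_mul h)).congr_deriv ?_
  simp only [FLJ', id]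
  field_simp
  ring

lemma hasDerivAt_FLJ' (h : ℝ) {r : ℝ} (hr : r < 1) : HasDerivAt (FLJ' h) (FLJ'' h r) r := by
  have hdiv := ((hasDerivAt_id r).const_sub 1).fun_inv (sub_ne_zero.2 hr.ne') |>.const_mul h
  refine ((hdiv.sub (hasDerivAt_pow 2 r)).sub
    (((hasDerivAt_id r).add_const 1).const_mul h)).congr_deriv ?_
  simp only [FLJ'', id]
  field_simp
  ring

lemma FLJ'_eq_sq_mul_div (h : ℝ) {r : ℝ} (hr : r ≠ 1) :
    FLJ' h r = r ^ 2 * (r - (1 - h)) / (1 - r) := by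
  rw [FLJ', eq_div_iff (sub_ne_zero.2 hr.symm)]
  field_simp
  ring

lemma FLJ'_pos {h r : ℝ} (hh : h ≤ 1) (hr : r ∈ Ioo (1 - h) 1) : 0 < FLJ' h r := by
  rw [FLJ'_eq_sq_mul_div h hr.2.ne]
  have hr₀ : 0 < r := by linarith [hr.1]
  exact div_pos (mul_pos (pow_pos hr₀ 2) (by linarith [hr.1])) (by linarith [hr.2])

lemma sq_div_le_FLJ'' {h r : ℝ} (hh₀ : 0 < h) (hh₁ : h ≤ 1) (hr : r ∈ Ico (1 - h) 1) :
    (1 - h) ^ 2 / h ≤ FLJ'' h r := by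
  obtain ⟨s, rfl⟩ : ∃ s, r = 1 - s := ⟨1 - r, by ring⟩
  obtain ⟨hs₀, hsh⟩ : 0 < s ∧ s ≤ h := ⟨by linarith [hr.2], by linarith [hr.1]⟩
  have hfactor : FLJ'' h (1 - s) - (1 - h) ^ 2 / h =
      (h - s) * (h + s - 2 * h * s ^ 2) / (h * s ^ 2) := by
    rw [FLJ'', sub_sub_cancel]
    field_simp
    ring
  -- `2 h s² ≤ h + s` since `h s² ≤ s` and `h s² ≤ h` for `0 < s ≤ h ≤ 1`
  have hsecond : 0 ≤ h + s - 2 * h * s ^ 2 := by nlinarith [mul_le_mul hsh hsh hs₀.le hh₀.le]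
  rw [← sub_nonneg, hfactor]
  exact div_nonneg (mul_nonneg (sub_nonneg.2 hsh) hsecond) (by positivity)

lemma strictMonoOn_Ioo_of_hasDerivAt_pos {f f' : ℝ → ℝ} {a b : ℝ}
    (hf : ∀ x ∈ Ioo a b, HasDerivAt f (f' x) x) (hf' : ∀ x ∈ Ioo a b, 0 < f' x) :
    StrictMonoOn f (Ioo a b) :=
  strictMonoOn_of_hasDerivWithinAt_pos (convex_Ioo a b)
    (fun x hx ↦ (hf x hx).continuousAt.continuousWithinAt)
    (by simpa only [interior_Ioo] using fun x hx ↦ (hf x hx).hasDerivWithinAt)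
    (by simpa only [interior_Ioo] using hf')

lemma strictConvexOn_Ioo_of_hasDerivAt {f f' : ℝ → ℝ} {a b : ℝ}
    (hf : ∀ x ∈ Ioo a b, HasDerivAt f (f' x) x) (hf' : StrictMonoOn f' (Ioo a b)) :
    StrictConvexOn ℝ (Ioo a b) f := by
  refine StrictMonoOn.strictConvexOn_of_deriv (convex_Ioo a b)
    (fun x hx ↦ (hf x hx).continuousAt.continuousWithinAt) ?_
  rw [interior_Ioo]
  exact hf'.congr fun x hx ↦ ((hf x hx).deriv).symm

/-- On `[1-h, 1)` one has `F'' ≥ (1-h)²/h > 0`, and `F' > 0` on `(1-h,1)`; in particular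
`F` is strictly convex and strictly increasing on `(1-h, 1)`. -/
theorem LJ_convex_increasing (h : ℝ) (hh : h ∈ Set.Ioo (0:ℝ) 1) :
    (∀ r ∈ Set.Ico (1 - h) (1:ℝ), (1 - h)^2 / h ≤ FLJ'' h r) ∧
    0 < (1 - h)^2 / h ∧
    (∀ r ∈ Set.Ioo (1 - h) (1:ℝ), 0 < FLJ' h r) ∧
    StrictConvexOn ℝ (Set.Ioo (1 - h) 1) (FLJ h) ∧
    StrictMonoOn (FLJ h) (Set.Ioo (1 - h) 1) := by
  obtain ⟨hh₀, hh₁⟩ := hh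
  have hF'' : ∀ r ∈ Ico (1 - h) 1, (1 - h) ^ 2 / h ≤ FLJ'' h r :=
    fun r hr ↦ sq_div_le_FLJ'' hh₀ hh₁.le hr
  have hbound : 0 < (1 - h) ^ 2 / h := div_pos (pow_pos (sub_pos.2 hh₁) 2) hh₀
  have hF' : ∀ r ∈ Ioo (1 - h) 1, 0 < FLJ' h r := fun r hr ↦ FLJ'_pos hh₁.le hr
  have hF'_mono : StrictMonoOn (FLJ' h) (Ioo (1 - h) 1) :=
    strictMonoOn_Ioo_of_hasDerivAt_pos (fun r hr ↦ hasDerivAt_FLJ' h hr.2)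
      fun r hr ↦ hbound.trans_le (hF'' r (Ioo_subset_Ico_self hr))
  have hF : ∀ r ∈ Ioo (1 - h) 1, HasDerivAt (FLJ h) (FLJ' h r) r :=
    fun r hr ↦ hasDerivAt_FLJ h hr.2
  exact ⟨hF'', hbound, hF', strictConvexOn_Ioo_of_hasDerivAt hF hF'_mono,
    strictMonoOn_Ioo_of_hasDerivAt_pos hF hF'⟩
end

section
/- Let h ∈ (0,1) and λ ∈ (0,1). Then F_λ(r) ≤ F(r) for every r ∈ [0,1), with equality F_λ(r) = F(r) for every r ∈ [0, 1−λ). -/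
/-- Convex singular part `F_{1,λ}` of the regularized Lennard--Jones potential. -/
noncomputable def F1reg (h l r : ℝ) : ℝ :=
  if r < 0 then -r^3/l + h/2 * r^2 + h*r
  else if r < 1 - l then -h * Real.log (1 - r)
  else -h * Real.log l + 3*h/2 - 2*h/l * (1 - r) + h/(2*l^2) * (1 - r)^2

/-- Non-convex regular part `F̄₂` of the regularized Lennard--Jones potential. -/
noncomputable def F2reg (h r : ℝ) : ℝ :=
  if r < 1 then -r^3/3 - h*(r^2/2 + r)
  else -1/3 - 3*h/2 - (1 + 2*h)*(r - 1) - (2 + h)/2 * (r - 1)^2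

/-- The regularized potential `F_λ = F_{1,λ} + F̄₂`. -/
noncomputable def Freg (h l r : ℝ) : ℝ := F1reg h l r + F2reg h r

open Real

lemma add_sq_div_two_le_neg_log_one_sub {x : ℝ} (hx0 : 0 ≤ x) (hx1 : x < 1) :
    x + x ^ 2 / 2 ≤ -log (1 - x) := by
  have hsum := hasSum_pow_div_log_of_abs_lt_one (abs_lt.2 ⟨by linarith, hx1⟩)
  have hpartial := sum_le_hasSum (Finset.range 2) (fun n _ => by positivity) hsum
  norm_num [Finset.sum_range_succ] at hpartial
  linarith

lemma FLJ_eq_neg_log_add_F2reg {h r : ℝ} (hr : r < 1) :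
    FLJ h r = -h * log (1 - r) + F2reg h r := by
  rw [FLJ, F2reg, if_pos hr]
  ring

lemma F1reg_of_mem_Ico {h l r : ℝ} (hr : r ∈ Set.Ico 0 (1 - l)) :
    F1reg h l r = -h * log (1 - r) := by
  rw [F1reg, if_neg hr.1.not_gt, if_pos hr.2]

lemma F1reg_le_neg_log {h l r : ℝ} (hh : 0 ≤ h) (hl : 0 < l) (hr : r ∈ Set.Ico 0 1) :
    F1reg h l r ≤ -h * log (1 - r) := by
  rcases lt_or_ge r (1 - l) with hrl | hrl
  · exact (F1reg_of_mem_Ico ⟨hr.1, hrl⟩).le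
  set x := 1 - (1 - r) / l with hx
  have hx0 : 0 ≤ x := by
    rw [hx, sub_nonneg, div_le_one hl]; linarith
  have hx1 : x < 1 := by
    have : 0 < 1 - r := by linarith [hr.2]
    rw [hx]; linarith [div_pos this hl]
  have h1r : 1 - r = l * (1 - x) := by rw [hx]; field_simp; ring
  have hlog : log (1 - r) = log l + log (1 - x) := by
    rw [h1r, log_mul hl.ne' (by linarith)]
  rw [F1reg, if_neg hr.1.not_gt, if_neg hrl.not_gt, hlog, h1r]
  have key := mul_le_mul_of_nonneg_left (add_sq_div_two_le_neg_log_one_sub hx0 hx1) hh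
  field_simp
  nlinarith [key]

/-- `F_λ ≤ F` on `[0,1)`, with equality on `[0, 1-λ)`. -/
theorem Freg_le_FLJ (h l : ℝ) (hh : h ∈ Set.Ioo (0:ℝ) 1) (hl : l ∈ Set.Ioo (0:ℝ) 1) :
    (∀ r ∈ Set.Ico (0:ℝ) 1, Freg h l r ≤ FLJ h r) ∧
    (∀ r ∈ Set.Ico (0:ℝ) (1 - l), Freg h l r = FLJ h r) := by
  refine ⟨fun r hr => ?_, fun r hr => ?_⟩
  · rw [Freg, FLJ_eq_neg_log_add_F2reg hr.2]
    exact add_le_add_left (F1reg_le_neg_log hh.1.le hl.1 hr) _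
  · rw [Freg, FLJ_eq_neg_log_add_F2reg (by linarith [hr.2, hl.1]), F1reg_of_mem_Ico hr]
end

section
/- Let h ∈ (0,1) and let F be the Lennard–Jones potential. For every ε ∈ (0, 1/2) there exist constants C₁ > 0 and C₂ > 0, depending only on ε and h, such that for all r ∈ [0,1) and all r₀ ∈ [ε, 1−ε], one has |F'(r)| ≤ C₁·F'(r)·(r − r₀) + C₂. -/
/-- Miranville--Zelik-type inequality for the Lennard--Jones potential: for every
`ε ∈ (0,1/2)` there are `C₁, C₂ > 0`, depending only on `ε` and `h`, such that
`|F'(r)| ≤ C₁ F'(r)(r - r₀) + C₂` for all `r ∈ [0,1)` and `r₀ ∈ [ε, 1-ε]`. -/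
theorem LJ_MZ_inequality (h : ℝ) (hh : h ∈ Set.Ioo (0:ℝ) 1)
    (ε : ℝ) (hε : ε ∈ Set.Ioo (0:ℝ) (1/2)) :
    ∃ C₁ > (0:ℝ), ∃ C₂ > (0:ℝ),
      ∀ r ∈ Set.Ico (0:ℝ) 1, ∀ r₀ ∈ Set.Icc ε (1 - ε),
        |FLJ' h r| ≤ C₁ * (FLJ' h r * (r - r₀)) + C₂ := by
  obtain ⟨hh0, hh1⟩ := hh
  obtain ⟨hε0, hε2⟩ := hε
  set δ : ℝ := min (ε/2) (h/4) with hδdef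
  have hδ0 : 0 < δ := lt_min (by linarith) (by linarith)
  have hδε : δ ≤ ε/2 := min_le_left _ _
  have hδh : δ ≤ h/4 := min_le_right _ _
  refine ⟨2/ε, by positivity, (h/δ + 3) * (1 + 2/ε), by positivity, ?_⟩
  rintro r ⟨hr0, hr1⟩ r₀ ⟨hr₀l, hr₀u⟩
  have h1r : 0 < 1 - r := by linarith
  have hM0 : (0:ℝ) ≤ h/δ + 3 := by positivity
  have hC₁0 : (0:ℝ) < 2/ε := by positivity
  by_cases hc : 1 - δ ≤ r
  · -- region near 1
    have h1rδ : 1 - r ≤ δ := by linarith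
    have h4 : 4 ≤ h/(1-r) := by
      rw [le_div_iff₀ h1r]; linarith
    have hF : 1 ≤ FLJ' h r := by
      unfold FLJ'
      nlinarith [sq_nonneg r]
    have hrr : ε/2 ≤ r - r₀ := by linarith
    have step : FLJ' h r ≤ 2/ε * (FLJ' h r * (r - r₀)) := by
      rw [div_mul_eq_mul_div, le_div_iff₀ hε0]
      nlinarith [mul_nonneg (by linarith : (0:ℝ) ≤ FLJ' h r)
        (by linarith : (0:ℝ) ≤ 2*(r-r₀)-ε)]
    rw [abs_of_nonneg (by linarith)]
    have hC₂ : (0:ℝ) ≤ (h/δ + 3) * (1 + 2/ε) := by positivity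
    linarith
  · -- bounded region
    have hδ1r : δ ≤ 1 - r := by linarith
    have hdiv : h/(1-r) ≤ h/δ := div_le_div_of_nonneg_left hh0.le hδ0 hδ1r
    have hdiv0 : (0:ℝ) ≤ h/(1-r) := by positivity
    have hF : |FLJ' h r| ≤ h/δ + 3 := by
      unfold FLJ'
      rw [abs_le]
      constructor <;> nlinarith [sq_nonneg r]
    have habs : |r - r₀| ≤ 1 := by
      rw [abs_le]; constructor <;> nlinarith
    have hprodabs : |FLJ' h r * (r - r₀)| ≤ (h/δ + 3) * 1 := by
      rw [abs_mul]
      exact mul_le_mul hF habs (abs_nonneg _) hM0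
    have hprod : -(h/δ + 3) ≤ FLJ' h r * (r - r₀) := by
      have := (abs_le.mp hprodabs).1
      linarith
    have hmul : 2/ε * (-(h/δ + 3)) ≤ 2/ε * (FLJ' h r * (r - r₀)) :=
      mul_le_mul_of_nonneg_left hprod hC₁0.le
    nlinarith [hF, hmul]
end
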